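/- arXiv:2003.03616 — 3 statements merged into one kernel-verified Lean document; each statement's English description precedes it below -/
import Mathlib

section
/- Let P and S be n×n row-stochastic matrices, and suppose S is diagonalizable as S = Z D̃ Z^{-1} with D̃ diagonal having exactly K diagonal entries equal to 1 and remaining diagonal entries of modulus at most |λ_{K+1}| < 1. Let S^∞ = Z E Z^{-1} where E keeps the unit eigenvalues and zeroes out the rest. Then for every t ≥ 1, ‖P^t − S^∞‖_∞ ≤ δt + κ|λ_{K+1}|^t, where δ = ‖P − S‖_∞ and κ = ‖Z‖_∞‖Z^{-1}‖_∞. -/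
open Matrix

/-- The maximum absolute row sum norm of a matrix. -/
noncomputable def infNorm {n : ℕ} (M : Matrix (Fin n) (Fin n) ℝ) : ℝ :=
  ⨆ i, ∑ j, |M i j|

/-!
Split `P ^ t - S^∞ = (P ^ t - S ^ t) + (S ^ t - S^∞)`. Since `‖P‖_∞, ‖S‖_∞ ≤ 1`, the
telescoping identity `P ^ (k+1) - S ^ (k+1) = P (P ^ k - S ^ k) + (P - S) S ^ k` makes the
first term grow by at most `δ` per step. Writing `S = Z D̃ Z⁻¹` gives
`S ^ t - S^∞ = Z (D̃ ^ t - E) Z⁻¹`, and the diagonal `D̃ ^ t - E` vanishes on the unit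
eigenvalues and is at most `|λ_{K+1}| ^ t` elsewhere.
-/

section SeminormedRing

variable {R : Type*} [SeminormedRing R]

lemma norm_mul_pow_le_of_norm_le_one {b : R} (hb : ‖b‖ ≤ 1) (x : R) (k : ℕ) :
    ‖x * b ^ k‖ ≤ ‖x‖ := by
  induction k with
  | zero => simp
  | succ k ih =>
    calc ‖x * b ^ (k + 1)‖ = ‖x * b ^ k * b‖ := by rw [pow_succ, mul_assoc]
      _ ≤ ‖x * b ^ k‖ * ‖b‖ := norm_mul_le _ _
      _ ≤ ‖x‖ * 1 := mul_le_mul ih hb (norm_nonneg _) (norm_nonneg _)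
      _ = ‖x‖ := mul_one _

lemma norm_pow_sub_pow_le_of_norm_le_one {a b : R} (ha : ‖a‖ ≤ 1) (hb : ‖b‖ ≤ 1)
    (k : ℕ) : ‖a ^ k - b ^ k‖ ≤ k * ‖a - b‖ := by
  induction k with
  | zero => simp
  | succ k ih =>
    have htel : a ^ (k + 1) - b ^ (k + 1) = a * (a ^ k - b ^ k) + (a - b) * b ^ k := by
      rw [pow_succ', pow_succ']; noncomm_ring
    calc ‖a ^ (k + 1) - b ^ (k + 1)‖
        ≤ ‖a‖ * ‖a ^ k - b ^ k‖ + ‖(a - b) * b ^ k‖ := by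
          rw [htel]; exact (norm_add_le _ _).trans (add_le_add_left (norm_mul_le _ _) _)
      _ ≤ 1 * (k * ‖a - b‖) + ‖a - b‖ :=
          add_le_add (mul_le_mul ha ih (norm_nonneg _) zero_le_one)
            (norm_mul_pow_le_of_norm_le_one hb _ k)
      _ = (k + 1 : ℕ) * ‖a - b‖ := by push_cast; ring

end SeminormedRing

section LinftyOpNorm

attribute [local instance] Matrix.linftyOpNormedRing

variable {m : Type*} [Fintype m]

lemma infNorm_eq_linfty_opNorm {n : ℕ} (M : Matrix (Fin n) (Fin n) ℝ) :
    infNorm M = ‖M‖ := by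
  rw [linfty_opNorm_def, Finset.sup_univ_eq_ciSup, NNReal.coe_iSup]
  unfold infNorm
  congr 1 with i
  push_cast
  simp [Real.norm_eq_abs]

lemma linfty_opNorm_le_one_of_mem_rowStochastic [DecidableEq m] {M : Matrix m m ℝ}
    (hM : M ∈ rowStochastic ℝ m) : ‖M‖ ≤ 1 := by
  rw [linfty_opNorm_def, ← NNReal.coe_one, NNReal.coe_le_coe, Finset.sup_le_iff]
  intro i _
  rw [← NNReal.coe_le_coe, NNReal.coe_sum, NNReal.coe_one, ← sum_row_of_mem_rowStochastic hM i]
  refine Finset.sum_le_sum fun j _ => ?_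
  rw [coe_nnnorm, Real.norm_of_nonneg (nonneg_of_mem_rowStochastic hM)]

lemma linfty_opNorm_mul_diagonal_mul_le {α : Type*} [NormedRing α] [DecidableEq m]
    (A B : Matrix m m α) (v : m → α) :
    ‖A * diagonal v * B‖ ≤ ‖A‖ * ‖B‖ * ‖v‖ :=
  calc ‖A * diagonal v * B‖ ≤ ‖A‖ * ‖v‖ * ‖B‖ := by
        rw [← linfty_opNorm_diagonal v]
        exact (norm_mul_le _ _).trans
          (mul_le_mul_of_nonneg_right (norm_mul_le _ _) (norm_nonneg _))
    _ = ‖A‖ * ‖B‖ * ‖v‖ := by ring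

end LinftyOpNorm

lemma norm_pow_sub_indicator_le {ι : Type*} [Fintype ι] {p : ι → Prop} [DecidablePred p]
    {d : ι → ℝ} {r : ℝ} (hr : 0 ≤ r) (hp : ∀ ℓ, p ℓ → d ℓ = 1)
    (hnp : ∀ ℓ, ¬ p ℓ → |d ℓ| ≤ r) (t : ℕ) :
    ‖fun ℓ => d ℓ ^ t - if p ℓ then (1 : ℝ) else 0‖ ≤ r ^ t := by
  refine (pi_norm_le_iff_of_nonneg (pow_nonneg hr t)).2 fun ℓ => ?_
  by_cases h : p ℓ
  · simp [h, hp ℓ h, pow_nonneg hr t]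
  · simpa [h, abs_pow] using pow_le_pow_left₀ (abs_nonneg _) (hnp ℓ h) t

theorem mesoscopic_equilibrium_bound_general {n K : ℕ} (P S Z Zinv : Matrix (Fin n) (Fin n) ℝ)
    (hPnonneg : ∀ i j, 0 ≤ P i j) (hProw : ∀ i, ∑ j, P i j = 1)
    (hSnonneg : ∀ i j, 0 ≤ S i j) (hSrow : ∀ i, ∑ j, S i j = 1)
    (hZ : Z * Zinv = 1) (hZ' : Zinv * Z = 1)
    (d : Fin n → ℝ) (lam : ℝ)
    (hd1 : ∀ ℓ : Fin n, ((ℓ : ℕ) < K ↔ d ℓ = 1))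
    (hd2 : ∀ ℓ : Fin n, K ≤ (ℓ : ℕ) → |d ℓ| ≤ |lam|)
    (hS : S = Z * Matrix.diagonal d * Zinv)
    (Sinf : Matrix (Fin n) (Fin n) ℝ)
    (hSinf : Sinf = Z * Matrix.diagonal (fun ℓ : Fin n => if (ℓ : ℕ) < K then (1 : ℝ) else 0) * Zinv)
    (t : ℕ) :
    infNorm (P ^ t - Sinf) ≤
      infNorm (P - S) * (t : ℝ) + (infNorm Z * infNorm Zinv) * |lam| ^ t := by
  let : NormedRing (Matrix (Fin n) (Fin n) ℝ) := Matrix.linftyOpNormedRing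
  have hP : ‖P‖ ≤ 1 := linfty_opNorm_le_one_of_mem_rowStochastic <|
    mem_rowStochastic_iff_sum.2 ⟨hPnonneg, hProw⟩
  have hS₁ : ‖S‖ ≤ 1 := linfty_opNorm_le_one_of_mem_rowStochastic <|
    mem_rowStochastic_iff_sum.2 ⟨hSnonneg, hSrow⟩
  have hspectral : S ^ t - Sinf =
      Z * diagonal (fun ℓ => d ℓ ^ t - if (ℓ : ℕ) < K then (1 : ℝ) else 0) * Zinv := by
    have hconj : (Z * diagonal d * Zinv) ^ t = Z * diagonal d ^ t * Zinv :=
      Units.conj_pow ⟨Z, Zinv, hZ, hZ'⟩ (diagonal d) t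
    rw [hS, hSinf, hconj, diagonal_pow, ← sub_mul, ← mul_sub, diagonal_sub]
    rfl
  have hdiag :
      ‖fun ℓ : Fin n => d ℓ ^ t - if (ℓ : ℕ) < K then (1 : ℝ) else 0‖ ≤ |lam| ^ t :=
    norm_pow_sub_indicator_le (abs_nonneg lam) (fun ℓ => (hd1 ℓ).1)
      (fun ℓ h => hd2 ℓ (not_lt.1 h)) t
  simp only [infNorm_eq_linfty_opNorm]
  calc ‖P ^ t - Sinf‖ ≤ ‖P ^ t - S ^ t‖ + ‖S ^ t - Sinf‖ :=
        norm_sub_le_norm_sub_add_norm_sub _ _ _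
    _ ≤ t * ‖P - S‖ + ‖Z‖ * ‖Zinv‖ * |lam| ^ t := by
      rw [hspectral]
      gcongr
      · exact norm_pow_sub_pow_le_of_norm_le_one hP hS₁ t
      · exact (linfty_opNorm_mul_diagonal_mul_le _ _ _).trans (by gcongr)
    _ = ‖P - S‖ * t + ‖Z‖ * ‖Zinv‖ * |lam| ^ t := by ring

/-- For row-stochastic `P, S` with `S = Z D̃ Z⁻¹` diagonalizable with exactly
`K` unit eigenvalues and the rest of modulus at most `|λ| < 1`, and `S^∞ = Z E Z⁻¹`,
`‖P^t - S^∞‖_∞ ≤ δ t + κ |λ|^t` with `δ = ‖P - S‖_∞`, `κ = ‖Z‖_∞ ‖Z⁻¹‖_∞`. -/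
theorem mesoscopic_equilibrium_bound {n K : ℕ} (P S Z Zinv : Matrix (Fin n) (Fin n) ℝ)
    (hPnonneg : ∀ i j, 0 ≤ P i j) (hProw : ∀ i, ∑ j, P i j = 1)
    (hSnonneg : ∀ i j, 0 ≤ S i j) (hSrow : ∀ i, ∑ j, S i j = 1)
    (hZ : Z * Zinv = 1) (hZ' : Zinv * Z = 1)
    (d : Fin n → ℝ) (lam : ℝ) (hlam : |lam| < 1)
    (hd1 : ∀ ℓ : Fin n, ((ℓ : ℕ) < K ↔ d ℓ = 1))
    (hd2 : ∀ ℓ : Fin n, K ≤ (ℓ : ℕ) → |d ℓ| ≤ |lam|)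
    (hS : S = Z * Matrix.diagonal d * Zinv)
    (Sinf : Matrix (Fin n) (Fin n) ℝ)
    (hSinf : Sinf = Z * Matrix.diagonal (fun ℓ : Fin n => if (ℓ : ℕ) < K then (1 : ℝ) else 0) * Zinv)
    (t : ℕ) (ht : 1 ≤ t) :
    infNorm (P ^ t - Sinf) ≤
      infNorm (P - S) * (t : ℝ) + (infNorm Z * infNorm Zinv) * |lam| ^ t :=
  mesoscopic_equilibrium_bound_general P S Z Zinv hPnonneg hProw hSnonneg hSrow hZ hZ' d lam hd1 hd2
    hS Sinf hSinf t
end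

section
/- If additionally there exists T_* such that (e_i − e_j) S_{r(t)}^∞ = 0 for all t > T_* (i.e., x_i and x_j lie in the same cluster at all scales r(t) with t > T_*), then ‖∑_{t=1}^∞ (e_i − e_j) P^t‖_1 ≤ ‖∑_{t=1}^{T_*} (e_i − e_j) S_{r(t)}^∞‖_1 + 2∑_{t=1}^∞ (δ_{r(t)} t + κ_{r(t)} |λ_{r(t)}^*|^t), and the analogous lower bound holds with a minus sign. -/
open Matrix

/-!
Put `v = e_i - e_j` and `B = ∑_{t=1}^{T_*} v S_{r(t)}^∞`. Since `v S_{r(t)}^∞ = 0` for `t > T_*`,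
`B` is also the full series `∑_{t≥1} v S_{r(t)}^∞`, so `A - B = ∑_{t≥1} v (P^t - S_{r(t)}^∞)`.
Each term has `ℓ¹` norm at most `2 ‖P^t - S_{r(t)}^∞‖_∞`, because `v` picks the difference of two
rows. Hence `‖A - B‖₁ ≤ 2 ∑_t (δ t + κ |λ|^t)`, and the reverse triangle inequality for `‖·‖₁`
gives both bounds.
-/

theorem hasSum_comp_add_one_of_eq_zero_of_lt {M : Type*} [AddCommMonoid M] [TopologicalSpace M]
    {f : ℕ → M} {T : ℕ} (hf : ∀ t, T < t → f t = 0) :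
    HasSum (fun t => f (t + 1)) (∑ t ∈ Finset.Icc 1 T, f t) := by
  rw [← Finset.Ico_add_one_right_eq_Icc, ← zero_add 1, ← Finset.sum_Ico_add' f,
    ← Finset.range_eq_Ico]
  exact hasSum_sum_of_ne_finset_zero fun t ht => hf _ (by simpa using ht)

theorem sum_abs_le_of_hasSum {ι κ : Type*} [Fintype κ] {f : ι → κ → ℝ} {a : κ → ℝ}
    {b : ι → ℝ} {β : ℝ} (hf : HasSum f a) (hb : HasSum b β)
    (hfb : ∀ t, ∑ ℓ, |f t ℓ| ≤ b t) : ∑ ℓ, |a ℓ| ≤ β := by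
  have hcont : Continuous fun x : κ → ℝ => ∑ ℓ, |x ℓ| := by fun_prop
  refine le_of_tendsto_of_tendsto' (hcont.tendsto a |>.comp hf) hb fun s => ?_
  calc ∑ ℓ, |(∑ t ∈ s, f t) ℓ| ≤ ∑ ℓ, ∑ t ∈ s, |f t ℓ| := by
        gcongr with ℓ
        simpa only [Finset.sum_apply] using Finset.abs_sum_le_sum_abs _ _
    _ = ∑ t ∈ s, ∑ ℓ, |f t ℓ| := Finset.sum_comm
    _ ≤ ∑ t ∈ s, b t := Finset.sum_le_sum fun t _ => hfb t

theorem abs_sum_abs_sub_sum_abs_le {κ : Type*} (s : Finset κ) (x y : κ → ℝ) :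
    |(∑ ℓ ∈ s, |x ℓ|) - (∑ ℓ ∈ s, |y ℓ|)| ≤ ∑ ℓ ∈ s, |x ℓ - y ℓ| := by
  rw [← Finset.sum_sub_distrib]
  exact (Finset.abs_sum_le_sum_abs _ _).trans
    (Finset.sum_le_sum fun ℓ _ => abs_abs_sub_abs_le_abs_sub _ _)

theorem sum_abs_row_le_infNorm {n : ℕ} (M : Matrix (Fin n) (Fin n) ℝ) (k : Fin n) :
    ∑ ℓ, |M k ℓ| ≤ infNorm M :=
  le_ciSup (f := fun k => ∑ ℓ, |M k ℓ|) (Set.finite_range _).bddAbove k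

theorem sum_abs_single_sub_single_vecMul_le {n : ℕ} (M : Matrix (Fin n) (Fin n) ℝ)
    (i j : Fin n) :
    ∑ ℓ, |((Pi.single i 1 - Pi.single j 1 : Fin n → ℝ) ᵥ* M) ℓ| ≤ 2 * infNorm M := by
  simp only [sub_vecMul, single_one_vecMul, Pi.sub_apply, row_apply]
  calc ∑ ℓ, |M i ℓ - M j ℓ| ≤ ∑ ℓ, (|M i ℓ| + |M j ℓ|) :=
        Finset.sum_le_sum fun ℓ _ => abs_sub _ _
    _ = ∑ ℓ, |M i ℓ| + ∑ ℓ, |M j ℓ| := Finset.sum_add_distrib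
    _ ≤ 2 * infNorm M := by
        linarith [sum_abs_row_le_infNorm M i, sum_abs_row_le_infNorm M j]

theorem multitemporal_same_cluster_bound_general {n R : ℕ} (P : Matrix (Fin n) (Fin n) ℝ)
    (Sinf : Fin R → Matrix (Fin n) (Fin n) ℝ) (r : ℕ → Fin R)
    (δ κ lam : Fin R → ℝ)
    (hbound : ∀ t : ℕ, 1 ≤ t →
      infNorm (P ^ t - Sinf (r t)) ≤ δ (r t) * t + κ (r t) * |lam (r t)| ^ t)
    (hsum : Summable (fun t : ℕ =>
      δ (r (t + 1)) * (t + 1 : ℕ) + κ (r (t + 1)) * |lam (r (t + 1))| ^ (t + 1)))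
    (i j : Fin n) (Tstar : ℕ)
    (hsame : ∀ t : ℕ, Tstar < t →
      (Pi.single i 1 - Pi.single j 1 : Fin n → ℝ) ᵥ* Sinf (r t) = 0)
    (A : Fin n → ℝ)
    (hA : HasSum (fun t : ℕ =>
      (Pi.single i 1 - Pi.single j 1 : Fin n → ℝ) ᵥ* P ^ (t + 1)) A) :
    (∑ ℓ, |A ℓ| ≤
      (∑ ℓ, |(∑ t ∈ Finset.Icc 1 Tstar,
        (Pi.single i 1 - Pi.single j 1 : Fin n → ℝ) ᵥ* Sinf (r t)) ℓ|) +
      2 * ∑' t : ℕ,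
        (δ (r (t + 1)) * (t + 1 : ℕ) + κ (r (t + 1)) * |lam (r (t + 1))| ^ (t + 1))) ∧
    (∑ ℓ, |A ℓ| ≥
      (∑ ℓ, |(∑ t ∈ Finset.Icc 1 Tstar,
        (Pi.single i 1 - Pi.single j 1 : Fin n → ℝ) ᵥ* Sinf (r t)) ℓ|) -
      2 * ∑' t : ℕ,
        (δ (r (t + 1)) * (t + 1 : ℕ) + κ (r (t + 1)) * |lam (r (t + 1))| ^ (t + 1))) := by
  set v : Fin n → ℝ := Pi.single i 1 - Pi.single j 1
  set ε : ℕ → ℝ := fun t =>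
    δ (r (t + 1)) * (t + 1 : ℕ) + κ (r (t + 1)) * |lam (r (t + 1))| ^ (t + 1)
  set B := ∑ t ∈ Finset.Icc 1 Tstar, v ᵥ* Sinf (r t)
  have hB : HasSum (fun t => v ᵥ* Sinf (r (t + 1))) B :=
    hasSum_comp_add_one_of_eq_zero_of_lt hsame
  have hAB : HasSum (fun t => v ᵥ* (P ^ (t + 1) - Sinf (r (t + 1)))) (A - B) := by
    simpa only [vecMul_sub] using hA.sub hB
  have hdist : ∑ ℓ, |A ℓ - B ℓ| ≤ 2 * ∑' t, ε t :=
    sum_abs_le_of_hasSum hAB (hsum.hasSum.mul_left 2) fun t =>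
      (sum_abs_single_sub_single_vecMul_le _ i j).trans
        (mul_le_mul_of_nonneg_left (hbound (t + 1) t.succ_pos) zero_le_two)
  obtain ⟨hupper, hlower⟩ :=
    abs_sub_le_iff.mp ((abs_sum_abs_sub_sum_abs_le Finset.univ A B).trans hdist)
  exact ⟨by linarith, by linarith⟩

/-- If `(e_i - e_j) S_{r(t)}^∞ = 0` for all `t > T_*`, then
`‖∑_{t≥1}(e_i-e_j)P^t‖₁ ≤ ‖∑_{t=1}^{T_*}(e_i-e_j)S_{r(t)}^∞‖₁ + 2∑_{t≥1}(δ_{r(t)}t + κ_{r(t)}|λ_{r(t)}|^t)`,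
along with the analogous lower bound. -/
theorem multitemporal_same_cluster_bound {n R : ℕ} (P : Matrix (Fin n) (Fin n) ℝ)
    (hPnonneg : ∀ i j, 0 ≤ P i j) (hProw : ∀ i, ∑ j, P i j = 1)
    (Sinf : Fin R → Matrix (Fin n) (Fin n) ℝ) (r : ℕ → Fin R)
    (δ κ lam : Fin R → ℝ)
    (hδ : ∀ k, 0 ≤ δ k) (hκ : ∀ k, 0 ≤ κ k) (hlam : ∀ k, |lam k| < 1)
    (hbound : ∀ t : ℕ, 1 ≤ t →
      infNorm (P ^ t - Sinf (r t)) ≤ δ (r t) * t + κ (r t) * |lam (r t)| ^ t)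
    (hsum : Summable (fun t : ℕ =>
      δ (r (t + 1)) * (t + 1 : ℕ) + κ (r (t + 1)) * |lam (r (t + 1))| ^ (t + 1)))
    (i j : Fin n) (Tstar : ℕ)
    (hsame : ∀ t : ℕ, Tstar < t →
      (Pi.single i 1 - Pi.single j 1 : Fin n → ℝ) ᵥ* Sinf (r t) = 0)
    (A : Fin n → ℝ)
    (hA : HasSum (fun t : ℕ =>
      (Pi.single i 1 - Pi.single j 1 : Fin n → ℝ) ᵥ* P ^ (t + 1)) A) :
    (∑ ℓ, |A ℓ| ≤
      (∑ ℓ, |(∑ t ∈ Finset.Icc 1 Tstar,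
        (Pi.single i 1 - Pi.single j 1 : Fin n → ℝ) ᵥ* Sinf (r t)) ℓ|) +
      2 * ∑' t : ℕ,
        (δ (r (t + 1)) * (t + 1 : ℕ) + κ (r (t + 1)) * |lam (r (t + 1))| ^ (t + 1))) ∧
    (∑ ℓ, |A ℓ| ≥
      (∑ ℓ, |(∑ t ∈ Finset.Icc 1 Tstar,
        (Pi.single i 1 - Pi.single j 1 : Fin n → ℝ) ᵥ* Sinf (r t)) ℓ|) -
      2 * ∑' t : ℕ,
        (δ (r (t + 1)) * (t + 1 : ℕ) + κ (r (t + 1)) * |lam (r (t + 1))| ^ (t + 1))) :=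
  multitemporal_same_cluster_bound_general P Sinf r δ κ lam hbound hsum i j Tstar hsame A hA
end

section
/- Let P ∈ ℝ^{n×n} be a Markov matrix of the form P = D^{-1}W with W symmetric with positive diagonal entries and D the diagonal degree matrix. Write the spectral decomposition of the symmetric matrix D^{-1/2}WD^{-1/2} as ∑_ℓ λ_ℓ φ_ℓ φ_ℓ^⊤ with orthonormal eigenvectors φ_ℓ and eigenvalues 1 = λ_1 > |λ_2| ≥ … ≥ |λ_n| ≥ 0. Let π be the stationary distribution, ψ_ℓ = φ_ℓ/√π (entrywise) and ϕ_ℓ = φ_ℓ·√π (entrywise). Then the diffusion state distance with weight w = 1/π satisfies 𝒟(x_i, x_j) = ‖(e_i − e_j)∑_{t=0}^∞ P^t‖_{ℓ²(1/π)} = sqrt( ∑_{ℓ=2}^n (1/(1−λ_ℓ))² (ψ_ℓ(x_i) − ψ_ℓ(x_j))² ). -/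
/-!
Writing `Ψ` for the matrix with rows `ψ_ℓ` and `Φ'` for the one with rows `ϕ_ℓ = φ_ℓ √π`, the
decomposition of `D^{-1/2} W D^{-1/2}` gives `P = Ψᵀ Λ Φ'` with `Φ' Ψᵀ = 1`, hence
`(e_i - e_j) Pᵗ = ∑_ℓ λ_ℓᵗ (ψ_ℓ(i) - ψ_ℓ(j)) ϕ_ℓ`. The term `ℓ = 1` vanishes because `ψ_1` is
constant, the others are geometric series with ratio `|λ_ℓ| < 1`, and Parseval's identity for the
orthonormal basis `ϕ_ℓ` of `ℓ²(1/π)` turns the norm of the sum into the sum of squared coefficients.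
-/

open Matrix

theorem pow_conj_of_mul_eq_one {M : Type*} [Monoid M] {X Y : M} (hXY : X * Y = 1)
    (hYX : Y * X = 1) (A : M) (t : ℕ) : (X * A * Y) ^ t = X * A ^ t * Y :=
  Units.conj_pow ⟨X, Y, hXY, hYX⟩ A t

section

variable {ι : Type*} [Fintype ι] [DecidableEq ι]

theorem sum_sq_vecMul_of_mul_transpose_eq_one {κ : Type*} [Fintype κ] {Φ : Matrix ι κ ℝ}
    (hΦ : Φ * Φᵀ = 1) (w : ι → ℝ) : ∑ k, (w ᵥ* Φ) k ^ 2 = ∑ ℓ, w ℓ ^ 2 := by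
  have key : (w ᵥ* Φ) ⬝ᵥ (w ᵥ* Φ) = w ⬝ᵥ w := by
    rw [← dotProduct_mulVec, ← mulVec_transpose, mulVec_mulVec, hΦ, one_mulVec]
  simpa only [dotProduct, sq] using key

theorem sum_sq_vecMul_mul_diagonal_sqrt_div {κ : Type*} [Fintype κ] [DecidableEq κ] {π : ι → ℝ}
    (hπpos : ∀ x, 0 < π x) {Φ : Matrix κ ι ℝ} (hΦ : Φ * Φᵀ = 1) (w : κ → ℝ) :
    ∑ k, (w ᵥ* (Φ * diagonal fun x => √(π x))) k ^ 2 * (1 / π k) = ∑ ℓ, w ℓ ^ 2 := by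
  rw [← sum_sq_vecMul_of_mul_transpose_eq_one hΦ w]
  refine Finset.sum_congr rfl fun k _ => ?_
  rw [← vecMul_vecMul, vecMul_diagonal, mul_pow, Real.sq_sqrt (hπpos k).le]
  field_simp [(hπpos k).ne']

theorem hasSum_vecMul_diagonal_pow (lam c : ι → ℝ) (hc : ∀ ℓ, c ℓ ≠ 0 → |lam ℓ| < 1) :
    HasSum (fun t : ℕ => c ᵥ* diagonal (lam ^ t)) (fun ℓ => c ℓ / (1 - lam ℓ)) := by
  refine Pi.hasSum.2 fun ℓ => ?_
  simp only [vecMul_diagonal, Pi.pow_apply]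
  by_cases h : c ℓ = 0
  · simp [h]
  · simpa [div_eq_mul_inv] using (hasSum_geometric_of_abs_lt_one (hc ℓ h)).mul_left (c ℓ)

theorem hasSum_vecMul_pow_of_eq_conj {P X Y : Matrix ι ι ℝ} {lam : ι → ℝ} (hYX : Y * X = 1)
    (hP : P = X * diagonal lam * Y) (u : ι → ℝ)
    (hu : ∀ ℓ, (u ᵥ* X) ℓ ≠ 0 → |lam ℓ| < 1) :
    HasSum (fun t : ℕ => u ᵥ* P ^ t) ((fun ℓ => (u ᵥ* X) ℓ / (1 - lam ℓ)) ᵥ* Y) := by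
  have hPt : ∀ t : ℕ, u ᵥ* P ^ t = (u ᵥ* X) ᵥ* diagonal (lam ^ t) ᵥ* Y := fun t => by
    rw [hP, pow_conj_of_mul_eq_one (mul_eq_one_comm.mp hYX) hYX, diagonal_pow,
      vecMul_vecMul, vecMul_vecMul, Matrix.mul_assoc]
  simp only [hPt]
  exact (hasSum_vecMul_diagonal_pow lam _ hu).map (vecMulLinear Y)
    (continuous_id.matrix_vecMul continuous_const)

theorem mul_diagonal_sqrt_mul_transpose_eq_one {π : ι → ℝ} {φ ψ : ι → ι → ℝ}
    (hπpos : ∀ x, 0 < π x) (horth : ∀ k l, ∑ x, φ k x * φ l x = if k = l then (1 : ℝ) else 0)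
    (hψ : ∀ ℓ x, ψ ℓ x = φ ℓ x / √(π x)) :
    of φ * diagonal (fun x => √(π x)) * (of ψ)ᵀ = 1 := by
  ext k l
  have hsqrt : ∀ x, √(π x) ≠ 0 := fun x => (Real.sqrt_pos.2 (hπpos x)).ne'
  rw [mul_apply]
  simp only [mul_diagonal, of_apply, transpose_apply, hψ, one_apply, ← horth]
  exact Finset.sum_congr rfl fun x _ => by field_simp [hsqrt x]

theorem markov_eq_transpose_mul_diagonal_mul {W P : Matrix ι ι ℝ} {d π lam : ι → ℝ}
    {φ ψ : ι → ι → ℝ} (hdpos : ∀ i, 0 < d i) (hP : ∀ i j, P i j = W i j / d i)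
    (hπ : ∀ i, π i = d i / ∑ k, d k)
    (hdecomp : ∀ i j, W i j / (√(d i) * √(d j)) = ∑ ℓ, lam ℓ * φ ℓ i * φ ℓ j)
    (hψ : ∀ ℓ x, ψ ℓ x = φ ℓ x / √(π x)) :
    P = (of ψ)ᵀ * diagonal lam * (of φ * diagonal fun x => √(π x)) := by
  ext i k
  have hS : 0 < √(∑ k, d k) :=
    Real.sqrt_pos.2 (Finset.sum_pos (fun k _ => hdpos k) ⟨i, Finset.mem_univ i⟩)
  have hentry : (∑ ℓ, ψ ℓ i * lam ℓ * (φ ℓ k * √(π k)))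
      = √(π k) / √(π i) * (W i k / (√(d i) * √(d k))) := by
    rw [hdecomp, Finset.mul_sum]
    exact Finset.sum_congr rfl fun ℓ _ => by rw [hψ]; ring
  rw [mul_apply]
  simp only [mul_diagonal, transpose_apply, of_apply]
  rw [hP, hentry, hπ, hπ, Real.sqrt_div (hdpos i).le, Real.sqrt_div (hdpos k).le]
  field_simp
  rw [Real.sq_sqrt (hdpos i).le, mul_comm (√(d k))]
  exact (mul_div_mul_right _ _ (Real.sqrt_pos.2 (hdpos k)).ne').symm

end

theorem dsd_spectral_formula_general {n : ℕ} (W : Matrix (Fin (n + 1)) (Fin (n + 1)) ℝ)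
    (d : Fin (n + 1) → ℝ) (hdpos : ∀ i, 0 < d i)
    (P : Matrix (Fin (n + 1)) (Fin (n + 1)) ℝ) (hP : ∀ i j, P i j = W i j / d i)
    (π : Fin (n + 1) → ℝ) (hπ : ∀ i, π i = d i / ∑ k, d k)
    (lam : Fin (n + 1) → ℝ) (φ : Fin (n + 1) → Fin (n + 1) → ℝ)
    (horth : ∀ k l, ∑ x, φ k x * φ l x = if k = l then (1 : ℝ) else 0)
    (hdecomp : ∀ i j, W i j / (Real.sqrt (d i) * Real.sqrt (d j)) =
      ∑ ℓ, lam ℓ * φ ℓ i * φ ℓ j)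
    (hlam : ∀ ℓ : Fin (n + 1), ℓ ≠ 0 → |lam ℓ| < 1)
    (hφ1 : ∀ x, φ 0 x = Real.sqrt (π x))
    (ψ : Fin (n + 1) → Fin (n + 1) → ℝ)
    (hψ : ∀ ℓ x, ψ ℓ x = φ ℓ x / Real.sqrt (π x))
    (i j : Fin (n + 1)) :
    ∃ v : Fin (n + 1) → ℝ,
      HasSum (fun t : ℕ =>
        (Pi.single i 1 - Pi.single j 1 : Fin (n + 1) → ℝ) ᵥ* P ^ t) v ∧
      Real.sqrt (∑ k, (v k) ^ 2 * (1 / π k)) =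
        Real.sqrt (∑ ℓ ∈ Finset.univ.erase 0,
          (1 / (1 - lam ℓ)) ^ 2 * (ψ ℓ i - ψ ℓ j) ^ 2) := by
  have hπpos : ∀ x, 0 < π x := fun x => by
    rw [hπ]; exact div_pos (hdpos x) (Finset.sum_pos (fun k _ => hdpos k) Finset.univ_nonempty)
  set u : Fin (n + 1) → ℝ := Pi.single i 1 - Pi.single j 1
  have hc : ∀ ℓ, (u ᵥ* (of ψ)ᵀ) ℓ = ψ ℓ i - ψ ℓ j := fun ℓ => by
    simp [u, sub_vecMul]
  have hc0 : (u ᵥ* (of ψ)ᵀ) 0 = 0 := by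
    rw [hc, hψ, hψ, hφ1, hφ1, div_self (Real.sqrt_pos.2 (hπpos i)).ne',
      div_self (Real.sqrt_pos.2 (hπpos j)).ne', sub_self]
  set w : Fin (n + 1) → ℝ := fun ℓ => (u ᵥ* (of ψ)ᵀ) ℓ / (1 - lam ℓ)
  refine ⟨w ᵥ* (of φ * diagonal fun x => √(π x)), ?_, ?_⟩
  · refine hasSum_vecMul_pow_of_eq_conj (mul_diagonal_sqrt_mul_transpose_eq_one hπpos horth hψ)
      (markov_eq_transpose_mul_diagonal_mul hdpos hP hπ hdecomp hψ) u fun ℓ hℓ => hlam ℓ ?_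
    rintro rfl
    exact hℓ hc0
  · have hΦ : of φ * (of φ)ᵀ = 1 := by
      ext k l
      simpa [mul_apply, one_apply] using horth k l
    congr 1
    calc ∑ k, ((w ᵥ* (of φ * diagonal fun x => √(π x))) k) ^ 2 * (1 / π k)
        = ∑ ℓ, w ℓ ^ 2 := sum_sq_vecMul_mul_diagonal_sqrt_div hπpos hΦ w
      _ = ∑ ℓ ∈ Finset.univ.erase 0, w ℓ ^ 2 :=
          (Finset.sum_erase _ (by simp [w, hc0])).symm
      _ = _ := Finset.sum_congr rfl fun ℓ _ => by simp only [w, hc]; ring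

/-- spectral formula for the diffusion state distance with weight `1/π`:
`𝒟(x_i,x_j) = ‖(e_i-e_j)∑_{t≥0}P^t‖_{ℓ²(1/π)} = sqrt(∑_{ℓ≥2} (1/(1-λ_ℓ))²(ψ_ℓ(x_i)-ψ_ℓ(x_j))²)`. -/
theorem dsd_spectral_formula {n : ℕ} (W : Matrix (Fin (n + 1)) (Fin (n + 1)) ℝ)
    (hWsymm : ∀ i j, W i j = W j i) (hWnonneg : ∀ i j, 0 ≤ W i j)
    (d : Fin (n + 1) → ℝ) (hd : ∀ i, d i = ∑ j, W i j) (hdpos : ∀ i, 0 < d i)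
    (P : Matrix (Fin (n + 1)) (Fin (n + 1)) ℝ) (hP : ∀ i j, P i j = W i j / d i)
    (π : Fin (n + 1) → ℝ) (hπ : ∀ i, π i = d i / ∑ k, d k)
    (lam : Fin (n + 1) → ℝ) (φ : Fin (n + 1) → Fin (n + 1) → ℝ)
    (horth : ∀ k l, ∑ x, φ k x * φ l x = if k = l then (1 : ℝ) else 0)
    (hdecomp : ∀ i j, W i j / (Real.sqrt (d i) * Real.sqrt (d j)) =
      ∑ ℓ, lam ℓ * φ ℓ i * φ ℓ j)
    (hlam1 : lam 0 = 1) (hlam : ∀ ℓ : Fin (n + 1), ℓ ≠ 0 → |lam ℓ| < 1)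
    (hφ1 : ∀ x, φ 0 x = Real.sqrt (π x))
    (ψ : Fin (n + 1) → Fin (n + 1) → ℝ)
    (hψ : ∀ ℓ x, ψ ℓ x = φ ℓ x / Real.sqrt (π x))
    (i j : Fin (n + 1)) :
    ∃ v : Fin (n + 1) → ℝ,
      HasSum (fun t : ℕ =>
        (Pi.single i 1 - Pi.single j 1 : Fin (n + 1) → ℝ) ᵥ* P ^ t) v ∧
      Real.sqrt (∑ k, (v k) ^ 2 * (1 / π k)) =
        Real.sqrt (∑ ℓ ∈ Finset.univ.erase 0,
          (1 / (1 - lam ℓ)) ^ 2 * (ψ ℓ i - ψ ℓ j) ^ 2) :=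
  dsd_spectral_formula_general W d hdpos P hP π hπ lam φ horth hdecomp hlam hφ1 ψ hψ i j
end
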